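/- arXiv:2110.00718 — 3 statements merged into one kernel-verified Lean document; each statement's English description precedes it below -/
import Mathlib

section
/- For every odd integer r ≥ 3 and every field F, the local orthogonality dimension of the cycle C_r on r vertices over F is strictly greater than 2. -/
open Matrix

/-- An orthogonal representation of a graph `G` over a field `F` in dimension `t`. -/
def IsOrthRep {V F : Type*} [Field F] {t : ℕ} (G : SimpleGraph V) (u : V → Fin t → F) : Prop :=
  (∀ v, u v ⬝ᵥ u v ≠ 0) ∧ ∀ ⦃v w⦄, G.Adj v w → u v ⬝ᵥ u w = 0

/-- The representation has locality at most `ℓ`: the span of the vectors of every closed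
neighborhood has dimension at most `ℓ`. -/
def RepLocalityLE {V F : Type*} [Field F] {t : ℕ} (G : SimpleGraph V) (u : V → Fin t → F)
    (ℓ : ℕ) : Prop :=
  ∀ v, Module.finrank F (Submodule.span F (u '' insert v (G.neighborSet v))) ≤ ℓ

/-- The local orthogonality dimension of `G` over `F`. -/
noncomputable def locOrthDim {V : Type*} (G : SimpleGraph V) (F : Type*) [Field F] : ℕ :=
  sInf {ℓ | ∃ t : ℕ, ∃ u : V → Fin t → F, IsOrthRep G u ∧ RepLocalityLE G u ℓ}

/-- The orthogonality dimension of `G` over `F`. -/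
noncomputable def orthDim {V : Type*} (G : SimpleGraph V) (F : Type*) [Field F] : ℕ :=
  sInf {t | ∃ u : V → Fin t → F, IsOrthRep G u}

/-- An independent representation of `G` over `F`. -/
def IsIndRep {V F : Type*} [Field F] {t : ℕ} (G : SimpleGraph V) (u : V → Fin t → F) : Prop :=
  ∀ v, u v ∉ Submodule.span F (u '' G.neighborSet v)

/-- A proper coloring of `G`. -/
def IsProperColoring {V C : Type*} (G : SimpleGraph V) (c : V → C) : Prop :=
  ∀ ⦃v w⦄, G.Adj v w → c v ≠ c w

/-- The coloring has locality at most `ℓ`: at most `ℓ` colors in every closed neighborhood. -/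
def ColoringLocalityLE {V C : Type*} (G : SimpleGraph V) (c : V → C) (ℓ : ℕ) : Prop :=
  ∀ v, (c '' insert v (G.neighborSet v)).ncard ≤ ℓ

/-- The local chromatic number of `G`. -/
noncomputable def locChrom {V : Type*} (G : SimpleGraph V) : ℕ :=
  sInf {ℓ | ∃ c : V → ℕ, IsProperColoring G c ∧ ColoringLocalityLE G c ℓ}

/-- `M` represents the graph `G`. -/
def MatRepresents {V F : Type*} [Field F] (G : SimpleGraph V) (M : Matrix V V F) : Prop :=
  (∀ i, M i i ≠ 0) ∧ ∀ ⦃i j⦄, i ≠ j → ¬ G.Adj i j → M i j = 0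

/-- The minrank of `G` over `F`. -/
noncomputable def minrank {V : Type*} [Fintype V] (F : Type*) [Field F] (G : SimpleGraph V) : ℕ :=
  sInf {r | ∃ M : Matrix V V F, MatRepresents G M ∧ M.rank = r}

/-!
In a representation of locality `2`, the closed neighbourhood of `w + 1` spans a plane containing
the anisotropic vector `u (w + 1)`, which is orthogonal to both `u w` and `u (w + 2)`; hence
`u (w + 2)` is a multiple of `u w`. Walking around an odd cycle in steps of `2` reaches vertex `1`
from vertex `0`, so `u 1` is a multiple of `u 0`, which is orthogonal to it: `u 1 ⬝ᵥ u 1 = 0`.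
-/

open Submodule in
theorem mem_span_singleton_of_dotProduct_eq_zero_of_finrank_le_two
    {ι F : Type*} [Fintype ι] [Field F] {a b c : ι → F}
    (ha : a ≠ 0) (hbb : b ⬝ᵥ b ≠ 0) (hba : b ⬝ᵥ a = 0) (hbc : b ⬝ᵥ c = 0)
    (hdim : Module.finrank F (span F {b, a, c}) ≤ 2) :
    c ∈ F ∙ a := by
  have hb : b ∉ span F {a, c} := by
    intro hmem
    obtain ⟨α, β, rfl⟩ := mem_span_pair.1 hmem
    simp [dotProduct_add, dotProduct_smul, hba, hbc] at hbb
  have hW : Module.finrank F (span F {a, c}) ≤ 1 := by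
    rw [span_insert, sup_comm, finrank_sup_span_singleton hb] at hdim
    omega
  have haW : F ∙ a = span F {a, c} :=
    eq_of_le_of_finrank_le (span_mono (by simp)) (by rwa [finrank_span_singleton ha])
  exact haW ▸ subset_span (by simp)

section OrthRep

variable {V F : Type*} [Field F] {t : ℕ} {G : SimpleGraph V} {u : V → Fin t → F}

theorem RepLocalityLE.mono {ℓ ℓ' : ℕ} (h : RepLocalityLE G u ℓ) (hℓ : ℓ ≤ ℓ') :
    RepLocalityLE G u ℓ' :=
  fun v => (h v).trans hℓ

theorem repLocalityLE_dim (G : SimpleGraph V) (u : V → Fin t → F) : RepLocalityLE G u t :=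
  fun _ => (Submodule.finrank_le _).trans (Module.finrank_fin_fun F).le

theorem isOrthRep_single {n : ℕ} (G : SimpleGraph (Fin n)) :
    IsOrthRep G (fun v => Pi.single v (1 : F)) :=
  ⟨fun v => by simp, fun _ _ h => by simp [h.ne']⟩

theorem IsOrthRep.span_singleton_le_of_adj (hu : IsOrthRep G u) (hloc : RepLocalityLE G u 2)
    {a b c : V} (hba : G.Adj b a) (hbc : G.Adj b c) :
    F ∙ u c ≤ F ∙ u a := by
  have hsub : {u b, u a, u c} ⊆ u '' insert b (G.neighborSet b) := by
    rintro _ (rfl | rfl | rfl)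
    · exact Set.mem_image_of_mem u (Set.mem_insert b _)
    · exact Set.mem_image_of_mem u (Set.mem_insert_of_mem b hba)
    · exact Set.mem_image_of_mem u (Set.mem_insert_of_mem b hbc)
  have hdim := (Submodule.finrank_mono (Submodule.span_mono hsub)).trans (hloc b)
  refine (Submodule.span_singleton_le_iff_mem _ _).2
    (mem_span_singleton_of_dotProduct_eq_zero_of_finrank_le_two ?_ (hu.1 b) (hu.2 hba)
      (hu.2 hbc) hdim)
  intro ha
  exact hu.1 a (by simp [ha])

end OrthRep

open SimpleGraph Fin.NatCast Fin.CommRing in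
theorem IsOrthRep.not_repLocalityLE_two_cycleGraph {F : Type*} [Field F] {n t : ℕ}
    (hodd : Odd (n + 2)) {u : Fin (n + 2) → Fin t → F} (hu : IsOrthRep (cycleGraph (n + 2)) u) :
    ¬ RepLocalityLE (cycleGraph (n + 2)) u 2 := by
  intro hloc
  have hstep (w : Fin (n + 2)) : F ∙ u (w + 2) ≤ F ∙ u w :=
    hu.span_singleton_le_of_adj hloc (b := w + 1) (cycleGraph_adj.2 (.inl (by ring)))
      (cycleGraph_adj.2 (.inr (by ring)))
  have hchain (m : ℕ) : F ∙ u (2 * m : ℕ) ≤ F ∙ u 0 := by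
    induction m with
    | zero => simp
    | succ m ih => simpa [mul_add, add_assoc] using (hstep _).trans ih
  obtain ⟨m, hm⟩ : ∃ m, 2 * m = n + 2 + 1 := by
    obtain ⟨j, hj⟩ := hodd
    exact ⟨j + 1, by omega⟩
  have h1 : u 1 ∈ F ∙ u 0 := by
    have h2m : ((2 * m : ℕ) : Fin (n + 2)) = 1 := by
      rw [hm, Nat.cast_succ, Fin.natCast_self, zero_add]
    rw [← Submodule.span_singleton_le_iff_mem, ← h2m]
    exact hchain m
  obtain ⟨k, hk⟩ := Submodule.mem_span_singleton.1 h1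
  apply hu.1 1
  nth_rw 1 [← hk]
  rw [smul_dotProduct, hu.2 (cycleGraph_adj.2 (.inr (by ring))), smul_zero]

theorem two_lt_locOrthDim_cycleGraph (r : ℕ) (hr : 3 ≤ r) (hodd : Odd r)
    (F : Type*) [Field F] :
    2 < locOrthDim (SimpleGraph.cycleGraph r) F := by
  obtain ⟨n, rfl⟩ : ∃ n, r = n + 2 := ⟨r - 2, by omega⟩
  refine Nat.lt_of_succ_le (le_csInf ⟨n + 2, n + 2, _, isOrthRep_single _,
    repLocalityLE_dim _ _⟩ ?_)
  rintro ℓ ⟨t, u, hu, hloc⟩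
  by_contra! hℓ
  exact hu.not_repLocalityLE_two_cycleGraph hodd (hloc.mono (by omega))
end

section
/- Let G be a graph on n vertices and F a field with |F| ≥ n. Then the minrank over F of the complement of G is at most the local chromatic number of G. -/
open Matrix

/-!
Fix a proper coloring `a : V → F` with at most `ℓ = locChrom G` colors in every closed
neighborhood; the colors can be taken in `F` because `F` has at least `|V|` elements. For each
vertex `v` let `p v` be the monic polynomial whose roots are the colors other than `a v` that
occur in the closed neighborhood of `v`, so `deg (p v) < ℓ`. The matrix `M v w = (p v).eval (a w)`
has nonzero diagonal and vanishes whenever `v ~ w` in `G`, hence represents `Gᶜ`; and it factors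
through the `ℓ × |V|` Vandermonde matrix of the colors, so its rank is at most `ℓ`.
-/

open Polynomial Function

section Coloring

variable {V C D : Type*} {G : SimpleGraph V}

theorem isProperColoring_of_injective {c : V → C} (hc : Injective c) : IsProperColoring G c :=
  fun _ _ h e => G.ne_of_adj h (hc e)

theorem coloringLocalityLE_natCard [Finite V] (c : V → C) : ColoringLocalityLE G c (Nat.card V) :=
  fun _ => (Set.ncard_image_le).trans (Set.ncard_le_card _)

theorem IsProperColoring.comp {c : V → C} (hc : IsProperColoring G c) {g : C → D}
    (hg : Set.InjOn g (Set.range c)) : IsProperColoring G (g ∘ c) :=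
  fun _ _ h e => hc h (hg (Set.mem_range_self _) (Set.mem_range_self _) e)

theorem ColoringLocalityLE.comp [Finite V] {c : V → C} {ℓ : ℕ} (hc : ColoringLocalityLE G c ℓ)
    (g : C → D) : ColoringLocalityLE G (g ∘ c) ℓ := fun v => by
  rw [Set.image_comp]
  exact (Set.ncard_image_le (Set.toFinite _)).trans (hc v)

theorem exists_coloring_locality_le_locChrom [Finite V] (G : SimpleGraph V) :
    ∃ c : V → ℕ, IsProperColoring G c ∧ ColoringLocalityLE G c (locChrom G) := by
  obtain ⟨c, hc⟩ := Countable.exists_injective_nat V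
  exact Nat.sInf_mem (s := {ℓ | ∃ c : V → ℕ, IsProperColoring G c ∧ ColoringLocalityLE G c ℓ})
    ⟨_, c, isProperColoring_of_injective hc, coloringLocalityLE_natCard c⟩

theorem exists_coloring_field_locality_le_locChrom [Fintype V] (G : SimpleGraph V) {F : Type*}
    [Field F] (hF : (Fintype.card V : Cardinal) ≤ Cardinal.mk F) :
    ∃ a : V → F, IsProperColoring G a ∧ ColoringLocalityLE G a (locChrom G) := by
  obtain ⟨c, hc, hloc⟩ := exists_coloring_locality_le_locChrom G
  obtain ⟨eV⟩ : Nonempty (Fin (Fintype.card V) ↪ F) := by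
    rw [← Cardinal.lift_mk_le']
    simpa using hF
  obtain ⟨ec⟩ : Nonempty (Set.range c ↪ Fin (Fintype.card V)) :=
    Embedding.nonempty_of_card_le (by simpa using Fintype.card_range_le c)
  set e := ec.trans eV
  have he : ∀ x : Set.range c, extend Subtype.val e 0 x = e x :=
    Subtype.val_injective.extend_apply _ _
  refine ⟨extend Subtype.val e 0 ∘ c, hc.comp ?_, hloc.comp _⟩
  rintro _ ⟨v, rfl⟩ _ ⟨w, rfl⟩ h
  exact congrArg Subtype.val <| e.injective <|
    (he ⟨c v, v, rfl⟩).symm.trans (h.trans (he ⟨c w, w, rfl⟩))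

def otherNbhdColors (G : SimpleGraph V) (c : V → C) (v : V) : Set C :=
  c '' insert v (G.neighborSet v) \ {c v}

theorem finite_otherNbhdColors [Finite V] (G : SimpleGraph V) (c : V → C) (v : V) :
    (otherNbhdColors G c v).Finite :=
  Set.toFinite (c '' insert v (G.neighborSet v) \ {c v})

end Coloring

theorem minrank_le_rank {V F : Type*} [Fintype V] [Field F] {G : SimpleGraph V}
    {M : Matrix V V F} (hM : MatRepresents G M) : minrank F G ≤ M.rank :=
  Nat.sInf_le ⟨M, hM, rfl⟩

theorem Matrix.rank_of_eval_le {ι κ R : Type*} [Fintype κ] [CommRing R] [StrongRankCondition R]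
    (p : ι → R[X]) (x : κ → R) {ℓ : ℕ} (hp : ∀ i, (p i).natDegree < ℓ) :
    (of fun i j => (p i).eval (x j)).rank ≤ ℓ := by
  have hfac : (of fun i j => (p i).eval (x j)) =
      (of fun i (k : Fin ℓ) => (p i).coeff k) * (rectVandermonde x 1 ℓ)ᵀ := by
    ext i j
    simp only [of_apply, mul_apply, transpose_apply, rectVandermonde_apply, Pi.one_apply, one_pow,
      mul_one]
    rw [eval_eq_sum_range' (hp i), ← Fin.sum_univ_eq_sum_range]
  rw [hfac]
  exact (rank_mul_le_right _ _).trans ((rank_le_card_height _).trans (Fintype.card_fin ℓ).le)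

section NeighborhoodPolynomial

variable {V F : Type*} [Field F] [Finite V] {G : SimpleGraph V} {a : V → F}

noncomputable def nbhdColorPoly (G : SimpleGraph V) (a : V → F) (v : V) : F[X] :=
  ∏ s ∈ (finite_otherNbhdColors G a v).toFinset, (X - C s)

theorem eval_nbhdColorPoly_self (v : V) : (nbhdColorPoly G a v).eval (a v) ≠ 0 := by
  rw [nbhdColorPoly, eval_prod, Finset.prod_ne_zero_iff]
  intro s hs
  simp only [Set.Finite.mem_toFinset, otherNbhdColors, Set.mem_sdiff, Set.mem_singleton_iff] at hs
  simpa [sub_eq_zero] using Ne.symm hs.2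

theorem eval_nbhdColorPoly_of_adj (ha : IsProperColoring G a) {v w : V} (h : G.Adj v w) :
    (nbhdColorPoly G a v).eval (a w) = 0 := by
  rw [nbhdColorPoly, eval_prod]
  refine Finset.prod_eq_zero (i := a w) ?_ (by simp)
  simp only [Set.Finite.mem_toFinset, otherNbhdColors, Set.mem_sdiff, Set.mem_singleton_iff]
  exact ⟨⟨w, Set.mem_insert_of_mem _ h, rfl⟩, (ha h).symm⟩

theorem natDegree_nbhdColorPoly_lt {ℓ : ℕ} (ha : ColoringLocalityLE G a ℓ) (v : V) :
    (nbhdColorPoly G a v).natDegree < ℓ := by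
  have hmem : a v ∈ a '' insert v (G.neighborSet v) := ⟨v, Set.mem_insert _ _, rfl⟩
  have hpos : 0 < (a '' insert v (G.neighborSet v)).ncard :=
    (Set.ncard_pos (Set.toFinite _)).mpr ⟨_, hmem⟩
  rw [nbhdColorPoly, natDegree_finsetProd_X_sub_C_eq_card,
    ← Set.ncard_eq_toFinset_card _ (finite_otherNbhdColors G a v), otherNbhdColors,
    Set.ncard_sdiff_singleton_of_mem hmem]
  have := ha v
  omega

theorem matRepresents_compl_nbhdColorPoly (ha : IsProperColoring G a) :
    MatRepresents Gᶜ (of fun v w => (nbhdColorPoly G a v).eval (a w)) :=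
  ⟨eval_nbhdColorPoly_self, fun _ _ hne hnadj =>
    eval_nbhdColorPoly_of_adj ha (by simpa [SimpleGraph.compl_adj, hne] using hnadj)⟩

end NeighborhoodPolynomial

theorem minrank_compl_le_locChrom {V : Type*} [Fintype V] (G : SimpleGraph V)
    (F : Type*) [Field F] (hF : (Fintype.card V : Cardinal) ≤ Cardinal.mk F) :
    minrank F Gᶜ ≤ locChrom G := by
  obtain ⟨a, ha, hloc⟩ := exists_coloring_field_locality_le_locChrom G hF
  calc minrank F Gᶜ ≤ (of fun v w => (nbhdColorPoly G a v).eval (a w)).rank :=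
        minrank_le_rank (matRepresents_compl_nbhdColorPoly ha)
    _ ≤ locChrom G := rank_of_eval_le _ a (natDegree_nbhdColorPoly_lt hloc)
end

section
/- For every graph G on n vertices and every finite field F of size q, the minrank of G over F is at most the local orthogonality dimension of the complement of G over F plus ⌈log_q n⌉. -/
open Matrix

/-!
An orthogonal representation of `Gᶜ` is in particular an independent one. If it has locality `ℓ`,
compose it with a linear map `F^t → F^(ℓ+k)`, where `n ≤ q^k`, that is injective on each of the
`n` spans of closed neighbourhoods: independence survives, and an independent representation of
`Gᶜ` in `F^m` yields a matrix of rank at most `m` representing `G`. Such a map exists by counting: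
a fixed nonzero vector is killed by exactly a `q^-(ℓ+k)` fraction of all matrices, and the spans
contain fewer than `n q^ℓ ≤ q^(ℓ+k)` nonzero vectors altogether.
-/

open Module Finset Matrix

section Counting

variable {F : Type*} [Field F] [Fintype F] {m n : Type*} [Fintype m] [Fintype n]

-- Stated multiplicatively: the count itself is `q ^ (|m| * |n| - |m|)` in truncated subtraction.
lemma card_mulVec_eq_zero_mul_pow {x : n → F} (hx : x ≠ 0) :
    Nat.card {A : Matrix m n F // A *ᵥ x = 0} * Fintype.card F ^ Fintype.card m
      = Fintype.card F ^ (Fintype.card m * Fintype.card n) := by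
  classical
  let L : Matrix m n F →ₗ[F] m → F := (mulVecBilin F F).flip x
  obtain ⟨j, hj⟩ : ∃ j, x j ≠ 0 := Function.ne_iff.mp hx
  have hL : Function.Surjective L := fun y => by
    refine ⟨vecMulVec y (Pi.single j (x j)⁻¹), ?_⟩
    rw [LinearMap.flip_apply, mulVecBilin_apply, vecMulVec_mulVec, single_dotProduct,
      inv_mul_cancel₀ hj, MulOpposite.op_one, one_smul]
  have hrank := L.finrank_range_add_finrank_ker
  rw [LinearMap.range_eq_top.mpr hL, finrank_top, finrank_matrix, finrank_self, mul_one,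
    finrank_fintype_fun_eq_card] at hrank
  have hker : Nat.card {A : Matrix m n F // A *ᵥ x = 0} = Nat.card (LinearMap.ker L) :=
    Nat.card_congr (Equiv.subtypeEquivRight fun A => by simp [L])
  rw [hker, Nat.card_eq_fintype_card, card_eq_pow_finrank (K := F), ← pow_add, ← hrank, add_comm]

lemma exists_mulVec_ne_zero_of_card_lt {S : Finset (n → F)} (hS0 : 0 ∉ S)
    (hS : #S < Fintype.card F ^ Fintype.card m) :
    ∃ A : Matrix m n F, ∀ x ∈ S, A *ᵥ x ≠ 0 := by
  classical
  set q := Fintype.card F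
  let killers (x : n → F) : Finset (Matrix m n F) := univ.filter (· *ᵥ x = 0)
  have hkillers : ∀ x ∈ S, #(killers x) * q ^ Fintype.card m
      = q ^ (Fintype.card m * Fintype.card n) := fun x hx => by
    rw [← card_mulVec_eq_zero_mul_pow (ne_of_mem_of_not_mem hx hS0), Nat.card_eq_fintype_card,
      Fintype.card_subtype]
  have hbad : #(S.biUnion killers) * q ^ Fintype.card m
      < q ^ Fintype.card m * q ^ (Fintype.card m * Fintype.card n) :=
    calc #(S.biUnion killers) * q ^ Fintype.card m
        ≤ (∑ x ∈ S, #(killers x)) * q ^ Fintype.card m := by gcongr; exact card_biUnion_le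
      _ = #S * q ^ (Fintype.card m * Fintype.card n) := by
        rw [sum_mul, sum_congr rfl hkillers, sum_const, smul_eq_mul]
      _ < q ^ Fintype.card m * q ^ (Fintype.card m * Fintype.card n) := by gcongr
  have hlt : #(S.biUnion killers) < #(univ : Finset (Matrix m n F)) := by
    rw [card_univ, card_eq_pow_finrank (K := F), finrank_matrix, finrank_self, mul_one]
    exact lt_of_mul_lt_mul_left' (mul_comm (#(S.biUnion killers)) _ ▸ hbad)
  obtain ⟨A, -, hA⟩ := exists_mem_notMem_of_card_lt_card hlt
  exact ⟨A, fun x hx hAx => hA (mem_biUnion.mpr ⟨x, hx, mem_filter.mpr ⟨mem_univ A, hAx⟩⟩)⟩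

lemma exists_matrix_mulVec_eq_zero_imp_of_finrank_le {ι : Type*} [Fintype ι] {ℓ k : ℕ}
    (W : ι → Submodule F (n → F)) (hW : ∀ i, finrank F (W i) ≤ ℓ)
    (hι : Fintype.card ι ≤ Fintype.card F ^ k) :
    ∃ A : Matrix (Fin (ℓ + k)) n F, ∀ i, ∀ x ∈ W i, A *ᵥ x = 0 → x = 0 := by
  classical
  set q := Fintype.card F
  let S : Finset (n → F) := univ.biUnion fun i => (univ.filter (· ∈ W i)).erase 0
  have hq : 0 < q := Fintype.card_pos
  have hcard : ∀ i, #((univ.filter (· ∈ W i)).erase 0) ≤ q ^ ℓ - 1 := fun i => by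
    rw [card_erase_of_mem (by simp), ← Fintype.card_subtype, card_eq_pow_finrank (K := F)]
    exact Nat.sub_le_sub_right (Nat.pow_le_pow_right hq (hW i)) 1
  have hS : #S < q ^ Fintype.card (Fin (ℓ + k)) :=
    calc #S ≤ Fintype.card ι * (q ^ ℓ - 1) := card_biUnion_le_card_mul _ _ _ fun i _ => hcard i
      _ ≤ q ^ k * (q ^ ℓ - 1) := by gcongr
      _ < q ^ k * q ^ ℓ := by gcongr; exact Nat.sub_lt (by positivity) one_pos
      _ = q ^ Fintype.card (Fin (ℓ + k)) := by rw [Fintype.card_fin, ← pow_add, add_comm]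
  obtain ⟨A, hA⟩ := exists_mulVec_ne_zero_of_card_lt (S := S) (by simp [S]) hS
  exact ⟨A, fun i x hx hAx => by_contra fun hx0 => hA x
    (mem_biUnion.mpr ⟨i, mem_univ i, mem_erase.mpr ⟨hx0, mem_filter.mpr ⟨mem_univ x, hx⟩⟩⟩) hAx⟩

end Counting

section Representations

variable {V F : Type*} [Field F] {G : SimpleGraph V} {t : ℕ} {u : V → Fin t → F}

lemma IsOrthRep.isIndRep (hu : IsOrthRep G u) : IsIndRep G u := fun v hv => by
  have hspan : Submodule.span F (u '' G.neighborSet v)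
      ≤ LinearMap.ker (dotProductBilin F F (u v)) := Submodule.span_le.mpr <| by
      rintro _ ⟨w, hw, rfl⟩
      exact hu.2 hw
  exact hu.1 v (hspan hv)

lemma IsIndRep.mulVec (hu : IsIndRep G u) {s : ℕ} (A : Matrix (Fin s) (Fin t) F)
    (hA : ∀ v, ∀ x ∈ Submodule.span F (u '' insert v (G.neighborSet v)), A *ᵥ x = 0 → x = 0) :
    IsIndRep G fun v => A *ᵥ u v := fun v hv => by
  have himage : (fun w => A *ᵥ u w) '' G.neighborSet v = A.mulVecLin '' (u '' G.neighborSet v) :=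
    (Set.image_image _ _ _).symm
  rw [himage, ← Submodule.map_span] at hv
  obtain ⟨y, hy, hAy⟩ := hv
  have hyv : y - u v = 0 := by
    refine hA v _ (sub_mem ?_ (Submodule.subset_span ⟨v, Set.mem_insert v _, rfl⟩)) ?_
    · exact Submodule.span_mono (Set.image_mono (Set.subset_insert v _)) hy
    · rw [mulVec_sub, ← A.mulVecLin_apply, hAy, sub_self]
  exact hu v (sub_eq_zero.mp hyv ▸ hy)

lemma minrank_le_of_isIndRep_compl [Fintype V] (hu : IsIndRep Gᶜ u) : minrank F G ≤ t := by
  classical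
  choose f hfv hfN using fun v => Submodule.exists_dual_map_eq_bot_of_notMem (hu v) inferInstance
  let a : V → Fin t → F := fun v => (dotProductEquiv F (Fin t)).symm (f v)
  let M : Matrix V V F := of a * (of u)ᵀ
  have hM : ∀ v w, M v w = f v (u w) := fun v w => by
    rw [← LinearEquiv.apply_symm_apply (dotProductEquiv F (Fin t)) (f v),
      dotProductEquiv_apply_apply]
    rfl
  have hrep : MatRepresents G M := by
    refine ⟨fun v => hM v v ▸ hfv v, fun v w hvw hG => ?_⟩
    have hmem : f v (u w) ∈ (Submodule.span F (u '' Gᶜ.neighborSet v)).map (f v) :=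
      Submodule.mem_map_of_mem (Submodule.subset_span ⟨w, (G.compl_adj v w).mpr ⟨hvw, hG⟩, rfl⟩)
    rwa [hfN v, Submodule.mem_bot, ← hM] at hmem
  calc minrank F G ≤ M.rank := Nat.sInf_le ⟨M, hrep, rfl⟩
    _ ≤ (of a).rank := rank_mul_le_left _ _
    _ ≤ t := (rank_le_card_width _).trans_eq (Fintype.card_fin t)

end Representations

lemma exists_isOrthRep_repLocalityLE_locOrthDim {V : Type*} [Finite V] (G : SimpleGraph V)
    (F : Type*) [Field F] :
    ∃ t, ∃ u : V → Fin t → F, IsOrthRep G u ∧ RepLocalityLE G u (locOrthDim G F) := by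
  classical
  refine Nat.sInf_mem (s := {ℓ | ∃ t, ∃ u : V → Fin t → F, IsOrthRep G u ∧ RepLocalityLE G u ℓ})
    ⟨Nat.card V, Nat.card V, fun v => Pi.single (Finite.equivFin V v) 1,
    ⟨fun v => by simp, fun v w hvw => ?_⟩, fun v => ?_⟩
  · simp [(Finite.equivFin V).injective.ne hvw.ne]
  · exact (Submodule.finrank_le _).trans (finrank_fin_fun F).le

theorem minrank_le_locOrthDim_compl_add_clog {V : Type*} [Fintype V] (G : SimpleGraph V)
    (F : Type*) [Field F] [Fintype F] :
    minrank F G ≤ locOrthDim Gᶜ F + Nat.clog (Fintype.card F) (Fintype.card V) := by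
  obtain ⟨t, u, hu, hloc⟩ := exists_isOrthRep_repLocalityLE_locOrthDim Gᶜ F
  obtain ⟨A, hA⟩ := exists_matrix_mulVec_eq_zero_imp_of_finrank_le
    (fun v => Submodule.span F (u '' insert v (Gᶜ.neighborSet v))) hloc
    (Nat.le_pow_clog Fintype.one_lt_card _)
  exact minrank_le_of_isIndRep_compl (hu.isIndRep.mulVec A hA)
end
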